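/- arXiv:2311.01569 — 2 statements merged into one kernel-verified Lean document; each statement's English description precedes it below -/
import Mathlib

section
/- For every integer n ≥ 2, the un-normalized first moment of bubble size over all linear chord diagrams on 2n vertices satisfies ∑_{p=1}^{2n} p·B_{n,p} = (2n-1)! / (2^{n-2}·(n-2)!). -/
open Finset

/-- A linear chord diagram on `2*n` vertices: a fixed-point-free involution of `Fin (2*n)`.
Vertex `v ∈ {1,...,2n}` is represented by the index `v-1 : Fin (2*n)`. -/
def IsLCD (n : ℕ) (f : Fin (2*n) → Fin (2*n)) : Prop :=
  ∀ i, f (f i) = i ∧ f i ≠ i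

/-- The chord `{i, i+1}` (1-based vertices) is a short chord of `f`. -/
def IsShort (n : ℕ) (f : Fin (2*n) → Fin (2*n)) (i : ℕ) : Prop :=
  ∃ (_h1 : 1 ≤ i) (h2 : i < 2*n), f ⟨i-1, by omega⟩ = ⟨i, h2⟩

/-- The interval `[a,b] ⊆ {1,...,2n}` (1-based) is a bubble of the diagram `f`:
it contains no short chord, its left end is the start of the diagram or is preceded
by the short chord `{a-2,a-1}`, and its right end is the end of the diagram or is
followed by the short chord `{b+1,b+2}`. -/
def IsBubble (n : ℕ) (f : Fin (2*n) → Fin (2*n)) (a b : ℕ) : Prop :=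
  1 ≤ a ∧ a ≤ b ∧ b ≤ 2*n ∧
  (∀ i, a ≤ i → i + 1 ≤ b → ¬ IsShort n f i) ∧
  (a = 1 ∨ IsShort n f (a-2)) ∧
  (b = 2*n ∨ IsShort n f (b+1))

open scoped Classical in
/-- `B n p` : the number of pairs `(D, [a,b])` where `D` is a linear chord diagram on
`2n` vertices and `[a,b]` is a bubble of `D` of size `p = b - a + 1`. -/
noncomputable def B (n p : ℕ) : ℕ :=
  ((univ ×ˢ (Finset.Icc 1 (2*n) ×ˢ Finset.Icc 1 (2*n))).filter
    (fun x : (Fin (2*n) → Fin (2*n)) × ℕ × ℕ =>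
      IsLCD n x.1 ∧ IsBubble n x.1 x.2.1 x.2.2 ∧ x.2.2 - x.2.1 + 1 = p)).card

open scoped Classical in
/-- `d n s` : the number of linear chord diagrams on `2n` vertices having exactly `s`
short chords. -/
noncomputable def d (n s : ℕ) : ℕ :=
  (univ.filter (fun f : Fin (2*n) → Fin (2*n) =>
    IsLCD n f ∧ ((Finset.Icc 1 (2*n-1)).filter (fun i => IsShort n f i)).card = s)).card

open scoped Classical in
/-- `pathMatch m j` : the number of `j`-edge matchings of the path graph on `m` vertices
`{1,...,m}` with edges `{i,i+1}`, `1 ≤ i ≤ m-1`.  An edge is encoded by its left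
endpoint; a set of edges is a matching iff no two left endpoints are consecutive. -/
noncomputable def pathMatch (m j : ℕ) : ℕ :=
  (((Finset.Icc 1 (m-1)).powerset).filter
    (fun S => S.card = j ∧ ∀ i ∈ S, i + 1 ∉ S)).card

/-- The double factorial `(2m-1)!! = (2m)! / (2^m * m!)`, so `(-1)!! = 1`. -/
def doubleFact (m : ℕ) : ℕ := (2*m).factorial / (2^m * m.factorial)


open scoped Classical

noncomputable def numLCD (n : ℕ) : ℕ :=
  (univ.filter (fun f : Fin (2*n) → Fin (2*n) => IsLCD n f)).card

def df : ℕ → ℕ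
  | 0 => 1
  | (m+1) => (2*m+1) * df m

lemma isShort_iff (n : ℕ) (f : Fin (2*n) → Fin (2*n)) (i : ℕ) (h1 : 1 ≤ i) (h2 : i < 2*n) :
    IsShort n f i ↔ f ⟨i-1, by omega⟩ = ⟨i, h2⟩ :=
  ⟨fun ⟨_, _, e⟩ => e, fun e => ⟨h1, h2, e⟩⟩

lemma not_adjacent {n : ℕ} {f : Fin (2*n) → Fin (2*n)} (hf : IsLCD n f) (i : ℕ) :
    ¬ (IsShort n f i ∧ IsShort n f (i+1)) := by
  rintro ⟨⟨h1, h2, e1⟩, ⟨h1', h2', e2⟩⟩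
  have e1' : f ⟨i, h2⟩ = ⟨i-1, by omega⟩ := by
    have := congrArg f e1
    rw [(hf _).1] at this
    exact this.symm
  have e2' : f ⟨i, h2⟩ = ⟨i+1, h2'⟩ := e2
  rw [e1'] at e2'
  have := Fin.mk.inj_iff.1 e2'
  omega

private noncomputable def extendFun {n : ℕ} (j k : Fin (2*(n+1))) (s : Finset (Fin (2*(n+1))))
    (hmem : ∀ i, i ∈ s ↔ i ≠ j ∧ i ≠ k) (e : Fin (2*n) ≃ {x // x ∈ s})
    (g : Fin (2*n) → Fin (2*n)) : Fin (2*(n+1)) → Fin (2*(n+1)) := fun i =>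
  if h1 : i = j then k else if h2 : i = k then j
  else ↑(e (g (e.symm ⟨i, (hmem i).2 ⟨h1, h2⟩⟩)))

lemma card_fixed (n : ℕ) (j k : Fin (2*(n+1))) (hjk : j ≠ k) :
    (univ.filter (fun f : Fin (2*(n+1)) → Fin (2*(n+1)) => IsLCD (n+1) f ∧ f j = k)).card
      = numLCD n := by
  classical
  set s : Finset (Fin (2*(n+1))) := {j, k}ᶜ with hs
  have hmem : ∀ i, i ∈ s ↔ i ≠ j ∧ i ≠ k := by
    intro i; simp [hs, not_or]
  have hcard : s.card = 2*n := by
    have h2 : ({j,k} : Finset (Fin (2*(n+1)))).card = 2 := by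
      rw [card_insert_of_notMem (by simpa using hjk), card_singleton]
    rw [hs, card_compl, h2, Fintype.card_fin]
    omega
  let e : Fin (2*n) ≃ {x // x ∈ s} := ((s.equivFin).trans (finCongr hcard)).symm
  have hes : ∀ t, (e t : Fin (2*(n+1))) ∈ s := fun t => (e t).2
  set Φ := extendFun j k s hmem e with hΦ
  have hΦj : ∀ g, Φ g j = k := by intro g; simp [hΦ, extendFun]
  have hΦk : ∀ g, Φ g k = j := by intro g; simp [hΦ, extendFun, Ne.symm hjk]
  have hΦs : ∀ g i (h : i ∈ s), Φ g i = ↑(e (g (e.symm ⟨i, h⟩))) := by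
    intro g i h
    have h' := (hmem i).1 h
    simp [hΦ, extendFun, h'.1, h'.2]
  symm
  apply Finset.card_bij (fun g _ => Φ g)
  · -- maps to
    intro g hg
    rw [mem_filter] at hg ⊢
    have hg := hg.2
    refine ⟨mem_univ _, ?_, hΦj g⟩
    intro i
    by_cases h1 : i = j
    · subst h1; rw [hΦj, hΦk]; exact ⟨rfl, Ne.symm hjk⟩
    · by_cases h2 : i = k
      · subst h2; rw [hΦk, hΦj]
        exact ⟨rfl, hjk⟩
      · have hi : i ∈ s := (hmem i).2 ⟨h1, h2⟩
        rw [hΦs g i hi]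
        constructor
        · rw [hΦs g _ (hes _)]
          have : (⟨(e (g (e.symm ⟨i, hi⟩)) : Fin (2*(n+1))), hes _⟩ : {x // x ∈ s})
              = e (g (e.symm ⟨i, hi⟩)) := Subtype.ext rfl
          rw [this, Equiv.symm_apply_apply, (hg _).1, Equiv.apply_symm_apply]
        · intro hcon
          have : e (g (e.symm ⟨i, hi⟩)) = ⟨i, hi⟩ := Subtype.ext hcon
          have : g (e.symm ⟨i, hi⟩) = e.symm ⟨i, hi⟩ := by
            rw [← Equiv.symm_apply_apply e (g (e.symm ⟨i, hi⟩)), this]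
          exact (hg _).2 this
  · -- injective
    intro g1 h1 g2 h2 heq
    funext t
    have := congrFun heq ↑(e t)
    rw [hΦs g1 _ (hes t), hΦs g2 _ (hes t)] at this
    have hcoe : (⟨(e t : Fin (2*(n+1))), hes t⟩ : {x // x ∈ s}) = e t := Subtype.ext rfl
    rw [hcoe, Equiv.symm_apply_apply] at this
    exact e.injective (Subtype.coe_injective this)
  · -- surjective
    intro f hf
    rw [mem_filter] at hf
    obtain ⟨-, hlcd, hfj⟩ := hf
    have hfk : f k = j := by rw [← hfj]; exact (hlcd j).1
    have hfs : ∀ t : Fin (2*n), f ↑(e t) ∈ s := by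
      intro t
      have h1 := (hmem _).1 (hes t)
      rw [hmem]
      constructor
      · intro hjj
        have := congrArg f hjj
        rw [(hlcd _).1, hfj] at this
        exact h1.2 this
      · intro hkk
        have := congrArg f hkk
        rw [(hlcd _).1, hfk] at this
        exact h1.1 this
    refine ⟨fun t => e.symm ⟨f ↑(e t), hfs t⟩, ?_, ?_⟩
    · rw [mem_filter]
      refine ⟨mem_univ _, ?_⟩
      set g := fun t => e.symm ⟨f ↑(e t), hfs t⟩ with hgdef
      have hge : ∀ t, (↑(e (g t)) : Fin (2*(n+1))) = f ↑(e t) := by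
        intro t; rw [hgdef]; simp
      intro t
      constructor
      · refine e.injective (Subtype.ext ?_)
        rw [hge, hge, (hlcd _).1]
      · intro hcon
        have := congrArg (fun z => (↑(e z) : Fin (2*(n+1)))) hcon
        simp only [hge] at this
        exact (hlcd _).2 this
    · set g := fun t => e.symm ⟨f ↑(e t), hfs t⟩ with hgdef
      have hge : ∀ t, (↑(e (g t)) : Fin (2*(n+1))) = f ↑(e t) := by
        intro t; rw [hgdef]; simp
      funext i
      by_cases h1 : i = j
      · subst h1; rw [hΦj, hfj]
      · by_cases h2 : i = k
        · subst h2; rw [hΦk, hfk]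
        · have hi : i ∈ s := (hmem i).2 ⟨h1, h2⟩
          rw [hΦs _ _ hi, hge, Equiv.apply_symm_apply]

lemma numLCD_zero : numLCD 0 = 1 := by
  classical
  rw [numLCD, filter_true_of_mem, card_univ]
  · simp
  · intro f _ i
    exact i.elim0

lemma numLCD_succ (n : ℕ) : numLCD (n+1) = (2*n+1) * numLCD n := by
  classical
  have h02 : (0:ℕ) < 2*(n+1) := by omega
  set j0 : Fin (2*(n+1)) := ⟨0, h02⟩
  have hsplit : (univ.filter (fun f : Fin (2*(n+1)) → Fin (2*(n+1)) => IsLCD (n+1) f))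
      = (univ.erase j0).biUnion (fun k => univ.filter (fun f => IsLCD (n+1) f ∧ f j0 = k)) := by
    ext f
    simp only [mem_biUnion, mem_filter, mem_univ, true_and, mem_erase]
    constructor
    · intro hf; exact ⟨f j0, ⟨(hf j0).2, trivial⟩, hf, rfl⟩
    · rintro ⟨k, _, hf, _⟩; exact hf
  have hdisj : ∀ x ∈ univ.erase j0, ∀ y ∈ univ.erase j0, x ≠ y →
      Disjoint (univ.filter (fun f : Fin (2*(n+1)) → Fin (2*(n+1)) => IsLCD (n+1) f ∧ f j0 = x))
        (univ.filter (fun f => IsLCD (n+1) f ∧ f j0 = y)) := by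
    intro x _ y _ hxy
    rw [disjoint_left]
    intro f hfx hfy
    rw [mem_filter] at hfx hfy
    exact hxy (by rw [← hfx.2.2, ← hfy.2.2])
  rw [numLCD, hsplit, card_biUnion hdisj]
  have hval : ∀ k ∈ univ.erase j0,
      (univ.filter (fun f : Fin (2*(n+1)) → Fin (2*(n+1)) => IsLCD (n+1) f ∧ f j0 = k)).card
        = numLCD n :=
    fun k hk => card_fixed n j0 k (Ne.symm (mem_erase.1 hk).1)
  rw [Finset.sum_congr rfl hval, sum_const, smul_eq_mul,
    card_erase_of_mem (mem_univ _), card_univ, Fintype.card_fin]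
  congr 1

lemma numLCD_eq_df (n : ℕ) : numLCD n = df n := by
  induction n with
  | zero => exact numLCD_zero
  | succ m ih => rw [numLCD_succ, ih]; rfl
lemma bubble_vertex_free {n : ℕ} {f : Fin (2*n) → Fin (2*n)} (hf : IsLCD n f)
    {a b v : ℕ} (hb : IsBubble n f a b) (hav : a ≤ v) (hvb : v ≤ b) :
    ¬ IsShort n f v ∧ ¬ IsShort n f (v-1) := by
  obtain ⟨h1a, hab, hb2n, hno, hleft, hright⟩ := hb
  constructor
  · intro hs
    obtain ⟨hv1, hv2n, -⟩ := id hs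
    by_cases hvb' : v + 1 ≤ b
    · exact hno v hav hvb' hs
    · have hveq : v = b := by omega
      rcases hright with h2n | hsb
      · omega
      · refine not_adjacent hf v ⟨hs, ?_⟩
        rw [show v + 1 = b + 1 by omega]
        exact hsb
  · intro hs
    obtain ⟨hv1, hv2n, -⟩ := id hs
    by_cases h : a ≤ v - 1
    · exact hno (v-1) h (by omega) hs
    · have hva : v = a := by omega
      rcases hleft with h1 | hsa
      · omega
      · obtain ⟨ha2, -, -⟩ := id hsa
        refine not_adjacent hf (a-2) ⟨hsa, ?_⟩
        rw [show a - 2 + 1 = v - 1 by omega]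
        exact hs

lemma bubble_left_not_lt {n : ℕ} {f : Fin (2*n) → Fin (2*n)} (hf : IsLCD n f)
    {a b a' b' v : ℕ} (h : IsBubble n f a b) (h' : IsBubble n f a' b')
    (hav : a ≤ v) (hvb : v ≤ b) (hav' : a' ≤ v) (hvb' : v ≤ b') : ¬ a' < a := by
  intro hlt
  obtain ⟨h1a, hab, hb2n, hno, hleft, hright⟩ := h
  obtain ⟨h1a', hab', hb2n', hno', hleft', hright'⟩ := h'
  rcases hleft with rfl | hsa
  · omega
  · obtain ⟨ha21, -, -⟩ := id hsa
    by_cases hcase : a' ≤ a - 2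
    · exact hno' (a-2) hcase (by omega) hsa
    · rcases hleft' with h1 | hsa'
      · omega
      · obtain ⟨h3, -, -⟩ := id hsa'
        refine not_adjacent hf (a'-2) ⟨hsa', ?_⟩
        rw [show a' - 2 + 1 = a - 2 by omega]
        exact hsa

lemma bubble_right_not_lt {n : ℕ} {f : Fin (2*n) → Fin (2*n)} (hf : IsLCD n f)
    {a b a' b' v : ℕ} (h : IsBubble n f a b) (h' : IsBubble n f a' b')
    (hav : a ≤ v) (hvb : v ≤ b) (hav' : a' ≤ v) (hvb' : v ≤ b') : ¬ b < b' := by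
  intro hlt
  obtain ⟨h1a, hab, hb2n, hno, hleft, hright⟩ := h
  obtain ⟨h1a', hab', hb2n', hno', hleft', hright'⟩ := h'
  rcases hright with rfl | hsb
  · omega
  · obtain ⟨hb1, hb2, -⟩ := id hsb
    by_cases hcase : b + 2 ≤ b'
    · exact hno' (b+1) (by omega) (by omega) hsb
    · rcases hright' with h2n | hsb'
      · omega
      · refine not_adjacent hf (b+1) ⟨hsb, ?_⟩
        rw [show b + 1 + 1 = b' + 1 by omega]
        exact hsb'

lemma bubble_unique {n : ℕ} {f : Fin (2*n) → Fin (2*n)} (hf : IsLCD n f)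
    {a b a' b' v : ℕ} (h : IsBubble n f a b) (h' : IsBubble n f a' b')
    (hav : a ≤ v) (hvb : v ≤ b) (hav' : a' ≤ v) (hvb' : v ≤ b') : a = a' ∧ b = b' := by
  have h1 := bubble_left_not_lt hf h h' hav hvb hav' hvb'
  have h2 := bubble_left_not_lt hf h' h hav' hvb' hav hvb
  have h3 := bubble_right_not_lt hf h h' hav hvb hav' hvb'
  have h4 := bubble_right_not_lt hf h' h hav' hvb' hav hvb
  omega

lemma exists_bubble {n : ℕ} {f : Fin (2*n) → Fin (2*n)} (hf : IsLCD n f) (v : ℕ)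
    (hv1 : 1 ≤ v) (hv2 : v ≤ 2*n)
    (hns : ¬ IsShort n f v) (hns' : ¬ IsShort n f (v-1)) :
    ∃ a b, IsBubble n f a b ∧ a ≤ v ∧ v ≤ b := by
  classical
  set L := (Icc 1 v).filter (fun a => a = 1 ∨ IsShort n f (a-2)) with hL
  have hLne : L.Nonempty := ⟨1, by simp [hL, hv1]⟩
  set R := (Icc v (2*n)).filter (fun b => b = 2*n ∨ IsShort n f (b+1)) with hR
  have hRne : R.Nonempty := ⟨2*n, by simp [hR, hv2]⟩
  have haL : L.max' hLne ∈ L := L.max'_mem hLne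
  have hbR : R.min' hRne ∈ R := R.min'_mem hRne
  obtain ⟨haI, haP⟩ := mem_filter.1 haL
  obtain ⟨ha1, hav⟩ := mem_Icc.1 haI
  obtain ⟨hbI, hbP⟩ := mem_filter.1 hbR
  obtain ⟨hbv, hb2⟩ := mem_Icc.1 hbI
  refine ⟨L.max' hLne, R.min' hRne,
    ⟨ha1, by omega, hb2, ?_, haP, hbP⟩, hav, hbv⟩
  intro i hai hib hsi
  obtain ⟨hi1, hi2, -⟩ := id hsi
  rcases Nat.lt_or_ge (i+1) v with hlt | hge
  · have hmem : i + 2 ∈ L := by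
      rw [hL, mem_filter, mem_Icc]
      exact ⟨⟨by omega, by omega⟩, Or.inr hsi⟩
    have := L.le_max' _ hmem
    omega
  · rcases Nat.lt_or_ge v i with hlt' | hge'
    · have hmem : i - 1 ∈ R := by
        rw [hR, mem_filter, mem_Icc]
        refine ⟨⟨by omega, by omega⟩, Or.inr ?_⟩
        rw [show i - 1 + 1 = i by omega]
        exact hsi
      have := R.min'_le _ hmem
      omega
    · rcases Nat.eq_or_lt_of_le hge' with heq | hlt2
      · exact hns (heq ▸ hsi)
      · have hieq : i = v - 1 := by omega
        exact hns' (hieq ▸ hsi)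

lemma card_freeverts {n : ℕ} {f : Fin (2*n) → Fin (2*n)} (hf : IsLCD n f) :
    ((Icc 1 (2*n)).filter (fun v => ¬ IsShort n f v ∧ ¬ IsShort n f (v-1))).card
      = 2*n - 2 * ((Icc 1 (2*n-1)).filter (fun i => IsShort n f i)).card
    ∧ 2 * ((Icc 1 (2*n-1)).filter (fun i => IsShort n f i)).card ≤ 2*n := by
  classical
  set S := (Icc 1 (2*n-1)).filter (fun i => IsShort n f i) with hS
  set V := S ∪ S.image (· + 1) with hV
  have hSmem : ∀ i, i ∈ S ↔ (1 ≤ i ∧ i ≤ 2*n - 1) ∧ IsShort n f i := by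
    intro i; rw [hS, mem_filter, mem_Icc]
  have hVsub : V ⊆ Icc 1 (2*n) := by
    rw [hV]
    apply union_subset
    · intro x hx
      rw [hSmem] at hx
      rw [mem_Icc]
      omega
    · intro x hx
      rw [mem_image] at hx
      obtain ⟨i, hi, rfl⟩ := hx
      rw [hSmem] at hi
      rw [mem_Icc]
      omega
  have hdisj : Disjoint S (S.image (· + 1)) := by
    rw [disjoint_left]
    intro x hx hx'
    rw [mem_image] at hx'
    obtain ⟨i, hi, rfl⟩ := hx'
    rw [hSmem] at hx hi
    exact not_adjacent hf i ⟨hi.2, hx.2⟩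
  have hVcard : V.card = 2 * S.card := by
    rw [hV, card_union_of_disjoint hdisj,
      card_image_of_injective _ (fun x y h => by simpa using h)]
    ring
  have hTV : ((Icc 1 (2*n)).filter (fun v => ¬ IsShort n f v ∧ ¬ IsShort n f (v-1)))
      = Icc 1 (2*n) \ V := by
    ext v
    rw [mem_filter, mem_sdiff, mem_Icc, hV, mem_union, mem_image]
    constructor
    · rintro ⟨hv, hnsv, hnsv'⟩
      refine ⟨hv, ?_⟩
      rintro (hvS | ⟨i, hiS, rfl⟩)
      · exact hnsv ((hSmem v).1 hvS).2
      · exact hnsv' (by simpa using ((hSmem i).1 hiS).2)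
    · rintro ⟨hv, hnV⟩
      refine ⟨hv, ?_, ?_⟩
      · intro hsv
        obtain ⟨h1, h2, -⟩ := id hsv
        exact hnV (Or.inl ((hSmem v).2 ⟨⟨by omega, by omega⟩, hsv⟩))
      · intro hsv
        obtain ⟨h1, h2, -⟩ := id hsv
        refine hnV (Or.inr ⟨v - 1, (hSmem _).2 ⟨⟨by omega, by omega⟩, hsv⟩, by omega⟩)
  have hVc := card_le_card hVsub
  rw [Nat.card_Icc] at hVc
  constructor
  · rw [hTV, card_sdiff_of_subset hVsub, Nat.card_Icc, hVcard]
    omega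
  · omega

lemma bubble_sum {n : ℕ} {f : Fin (2*n) → Fin (2*n)} (hf : IsLCD n f) :
    ∑ x ∈ (Icc 1 (2*n) ×ˢ Icc 1 (2*n)).filter (fun x : ℕ × ℕ => IsBubble n f x.1 x.2),
      (x.2 - x.1 + 1)
    = 2*n - 2 * ((Icc 1 (2*n-1)).filter (fun i => IsShort n f i)).card := by
  classical
  set P := (Icc 1 (2*n) ×ˢ Icc 1 (2*n)).filter (fun x : ℕ × ℕ => IsBubble n f x.1 x.2) with hP
  have hPmem : ∀ x : ℕ × ℕ, x ∈ P ↔ IsBubble n f x.1 x.2 := by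
    intro x
    rw [hP, mem_filter, mem_product, mem_Icc, mem_Icc]
    constructor
    · exact fun h => h.2
    · intro h
      obtain ⟨h1, h2, h3, -, -, -⟩ := id h
      exact ⟨⟨⟨h1, by omega⟩, ⟨by omega, h3⟩⟩, h⟩
  have step1 : ∑ x ∈ P, (x.2 - x.1 + 1) = ∑ x ∈ P, (Icc x.1 x.2).card := by
    apply sum_congr rfl
    intro x hx
    have hb := (hPmem x).1 hx
    obtain ⟨h1, h2, h3, -, -, -⟩ := id hb
    rw [Nat.card_Icc]
    omega
  rw [step1, ← card_sigma, ← (card_freeverts hf).1]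
  apply Finset.card_bij (fun z _ => z.2)
  · intro z hz
    rw [mem_sigma] at hz
    obtain ⟨hzP, hzI⟩ := hz
    have hb := (hPmem _).1 hzP
    rw [mem_Icc] at hzI
    rw [mem_filter, mem_Icc]
    obtain ⟨h1, h2, h3, -, -, -⟩ := id hb
    exact ⟨⟨by omega, by omega⟩, bubble_vertex_free hf hb hzI.1 hzI.2⟩
  · rintro ⟨⟨a, b⟩, v⟩ h1 ⟨⟨a', b'⟩, v'⟩ h2 heq
    simp only at heq
    rw [mem_sigma, mem_Icc] at h1 h2
    have hb := (hPmem _).1 h1.1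
    have hb' := (hPmem _).1 h2.1
    subst heq
    obtain ⟨hA, hB⟩ := bubble_unique hf hb hb' h1.2.1 h1.2.2 h2.2.1 h2.2.2
    subst hA
    subst hB
    rfl
  · intro v hv
    rw [mem_filter, mem_Icc] at hv
    obtain ⟨⟨hv1, hv2⟩, hns, hns'⟩ := hv
    obtain ⟨a, b, hb, hav, hvb⟩ := exists_bubble hf v hv1 hv2 hns hns'
    refine ⟨⟨(a, b), v⟩, ?_, rfl⟩
    rw [mem_sigma, mem_Icc]
    exact ⟨(hPmem _).2 hb, hav, hvb⟩

lemma sum_short_total (m : ℕ) :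
    ∑ f ∈ (univ.filter (fun f : Fin (2*(m+1)) → Fin (2*(m+1)) => IsLCD (m+1) f)),
      ((Icc 1 (2*(m+1)-1)).filter (fun i => IsShort (m+1) f i)).card
    = (2*(m+1)-1) * numLCD m := by
  classical
  have hswap : ∑ f ∈ (univ.filter (fun f : Fin (2*(m+1)) → Fin (2*(m+1)) => IsLCD (m+1) f)),
      ((Icc 1 (2*(m+1)-1)).filter (fun i => IsShort (m+1) f i)).card
      = ∑ i ∈ Icc 1 (2*(m+1)-1),
          ((univ.filter (fun f : Fin (2*(m+1)) → Fin (2*(m+1)) =>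
            IsLCD (m+1) f ∧ IsShort (m+1) f i)).card) := by
    simp only [card_filter]
    rw [Finset.sum_comm]
    apply sum_congr rfl
    intro i _
    rw [sum_filter]
    apply sum_congr rfl
    intro f _
    by_cases h1 : IsLCD (m+1) f <;> by_cases h2 : IsShort (m+1) f i <;> simp [h1, h2]
  rw [hswap]
  have hval : ∀ i ∈ Icc 1 (2*(m+1)-1),
      ((univ.filter (fun f : Fin (2*(m+1)) → Fin (2*(m+1)) =>
        IsLCD (m+1) f ∧ IsShort (m+1) f i)).card) = numLCD m := by
    intro i hi
    rw [mem_Icc] at hi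
    have hi2 : i < 2*(m+1) := by omega
    have hne : (⟨i-1, by omega⟩ : Fin (2*(m+1))) ≠ ⟨i, hi2⟩ := by
      intro h
      have := Fin.mk.inj_iff.1 h
      omega
    rw [← card_fixed m ⟨i-1, by omega⟩ ⟨i, hi2⟩ hne]
    apply congrArg card
    apply filter_congr
    intro f _
    rw [isShort_iff (m+1) f i hi.1 hi2]
  rw [sum_congr rfl hval, sum_const, smul_eq_mul, Nat.card_Icc]
  congr 1

lemma fact_df (m : ℕ) : (2*m).factorial = 2^m * m.factorial * df m := by
  induction m with
  | zero => rfl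
  | succ k ih =>
    rw [show 2*(k+1) = (2*k+1)+1 by ring, Nat.factorial_succ,
      show 2*k+1 = (2*k)+1 by ring, Nat.factorial_succ, ih,
      Nat.factorial_succ, pow_succ, df]
    ring

lemma step_p (n : ℕ) :
    ∑ p ∈ Icc 1 (2*n), p * B n p
      = ∑ x ∈ (univ ×ˢ (Icc 1 (2*n) ×ˢ Icc 1 (2*n))).filter
          (fun x : (Fin (2*n) → Fin (2*n)) × ℕ × ℕ =>
            IsLCD n x.1 ∧ IsBubble n x.1 x.2.1 x.2.2),
          (x.2.2 - x.2.1 + 1) := by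
  classical
  set bigset := (univ ×ˢ (Icc 1 (2*n) ×ˢ Icc 1 (2*n))).filter
      (fun x : (Fin (2*n) → Fin (2*n)) × ℕ × ℕ =>
        IsLCD n x.1 ∧ IsBubble n x.1 x.2.1 x.2.2) with hbig
  have hB : ∀ p, B n p
      = (bigset.filter (fun x => x.2.2 - x.2.1 + 1 = p)).card := by
    intro p
    rw [hbig, filter_filter, B]
    exact congrArg card (filter_congr fun x _ => by tauto)
  have hmaps : ∀ x ∈ bigset, x.2.2 - x.2.1 + 1 ∈ Icc 1 (2*n) := by
    intro x hx
    rw [hbig, mem_filter] at hx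
    obtain ⟨-, -, h1, h2, h3, -, -, -⟩ := hx
    rw [mem_Icc]
    omega
  rw [← Finset.sum_fiberwise_of_maps_to hmaps]
  apply sum_congr rfl
  intro p _
  have hc : ∀ x ∈ bigset.filter (fun x => x.2.2 - x.2.1 + 1 = p),
      x.2.2 - x.2.1 + 1 = p := fun x hx => (mem_filter.1 hx).2
  rw [sum_congr rfl hc, sum_const, smul_eq_mul, hB p, mul_comm]

lemma step_group (n : ℕ) :
    ∑ x ∈ (univ ×ˢ (Icc 1 (2*n) ×ˢ Icc 1 (2*n))).filter
        (fun x : (Fin (2*n) → Fin (2*n)) × ℕ × ℕ =>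
          IsLCD n x.1 ∧ IsBubble n x.1 x.2.1 x.2.2),
        (x.2.2 - x.2.1 + 1)
      = ∑ f ∈ univ.filter (fun f : Fin (2*n) → Fin (2*n) => IsLCD n f),
          (2*n - 2 * ((Icc 1 (2*n-1)).filter (fun i => IsShort n f i)).card) := by
  classical
  rw [sum_filter, Finset.sum_product]
  rw [sum_filter]
  apply sum_congr rfl
  intro f _
  by_cases hf : IsLCD n f
  · simp only [hf, true_and, if_true]
    rw [← bubble_sum hf, sum_filter]
  · simp [hf]

theorem first_moment_bubbles_aux (n : ℕ) (hn : 2 ≤ n) :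
    (∑ p ∈ Finset.Icc 1 (2*n), (p : ℚ) * (B n p : ℚ)) =
      (((2*n-1).factorial : ℕ) : ℚ) / ((2^(n-2) * (n-2).factorial : ℕ) : ℚ) := by
  classical
  obtain ⟨m, rfl⟩ : ∃ m, n = m + 2 := ⟨n - 2, by omega⟩
  set n := m + 2 with hn2
  have hcast : (∑ p ∈ Finset.Icc 1 (2*n), (p : ℚ) * (B n p : ℚ))
      = ((∑ p ∈ Finset.Icc 1 (2*n), p * B n p : ℕ) : ℚ) := by
    push_cast
    rfl
  rw [hcast, step_p, step_group]
  have hsum : ((∑ f ∈ univ.filter (fun f : Fin (2*n) → Fin (2*n) => IsLCD n f),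
      (2*n - 2 * ((Icc 1 (2*n-1)).filter (fun i => IsShort n f i)).card) : ℕ) : ℚ)
      = ∑ f ∈ univ.filter (fun f : Fin (2*n) → Fin (2*n) => IsLCD n f),
          ((2*n : ℚ) - 2 * (((Icc 1 (2*n-1)).filter (fun i => IsShort n f i)).card : ℚ)) := by
    rw [Nat.cast_sum]
    apply sum_congr rfl
    intro f hf
    rw [mem_filter] at hf
    have hb := (card_freeverts hf.2).2
    rw [Nat.cast_sub hb]
    push_cast
    ring
  rw [hsum, Finset.sum_sub_distrib, sum_const, ← Finset.mul_sum, ← Nat.cast_sum _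
    (fun f => ((Icc 1 (2*n-1)).filter (fun i => IsShort n f i)).card)]
  have hss : ∑ f ∈ univ.filter (fun f : Fin (2*n) → Fin (2*n) => IsLCD n f),
      ((Icc 1 (2*n-1)).filter (fun i => IsShort n f i)).card
      = (2*n-1) * numLCD (m+1) := sum_short_total (m+1)
  rw [hss]
  have hcard : (univ.filter (fun f : Fin (2*n) → Fin (2*n) => IsLCD n f)).card
      = numLCD n := rfl
  rw [hcard, numLCD_eq_df, numLCD_eq_df]
  have hdfn : df n = (2*(m+1)+1) * df (m+1) := rfl
  have hdfm : df (m+1) = (2*m+1) * df m := rfl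
  -- LHS value
  have hfact : (2*n-1).factorial
      = (2^(n-2) * (n-2).factorial) * ((2*m+3) * ((2*m+2) * ((2*m+1) * df m))) := by
    have h1 : 2*n-1 = (2*m+2)+1 := by omega
    have h2 : n - 2 = m := by omega
    rw [h1, h2, Nat.factorial_succ, show (2*m+2) = (2*m+1)+1 by ring, Nat.factorial_succ,
      show (2*m+1) = (2*m)+1 by ring, Nat.factorial_succ, fact_df m]
    ring
  rw [hfact]
  have hden : ((2^(n-2) * (n-2).factorial : ℕ) : ℚ) ≠ 0 := by
    push_cast
    positivity
  rw [eq_div_iff hden, nsmul_eq_mul, hdfn, hdfm]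
  rw [show 2*n-1 = 2*m+3 from by omega]
  simp only [hn2, Nat.add_sub_cancel]
  push_cast
  ring


/-- For every `n ≥ 2`, the un-normalized first moment of bubble size is
`(2n-1)! / (2^{n-2}·(n-2)!)`. -/
theorem first_moment_bubbles (n : ℕ) (hn : 2 ≤ n) :
    (∑ p ∈ Finset.Icc 1 (2*n), (p : ℚ) * (B n p : ℚ)) =
      (((2*n-1).factorial : ℕ) : ℚ) / ((2^(n-2) * (n-2).factorial : ℕ) : ℚ) :=
  first_moment_bubbles_aux n hn
end

section
/- The mean bubble size over all linear chord diagrams on 2n vertices is asymptotic to n: the sequence n ↦ (∑_{p=1}^{2n} p·B_{n,p}) / (n · ∑_{p=1}^{2n} B_{n,p}) tends to 1 as n → ∞. -/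
open Finset

/-!
A vertex is free if it lies on no short chord. The bubbles of a diagram are exactly the maximal
runs of consecutive free vertices, so the total size of its bubbles is its number of free
vertices, and its number of bubbles is the number of free vertices `b` with `b = 2n` or `b + 1`
not free. Summing over all diagrams turns both counts into sums, over positions, of the number of
diagrams containing one or two prescribed chords, which is `T (2n - 2)` resp. `T (2n - 4)` for
`T m` the number of perfect matchings of `m` points. With `T (m + 2) = (m + 1) T m` this gives
`∑ p B n p = (2n - 2) (2n - 1) T (2n - 2)` and `∑ B n p = (4n - 5) T (2n - 2)`, and the mean
bubble size `(2n - 2) (2n - 1) / (4n - 5)` is asymptotic to `n`.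
-/

section Matchings

variable {α : Type*} [DecidableEq α] {j k : α}

variable (j k) in
def extendMatching (g : {x // x ≠ j ∧ x ≠ k} → {x // x ≠ j ∧ x ≠ k}) (x : α) : α :=
  if hj : x = j then k else if hk : x = k then j else g ⟨x, hj, hk⟩

variable (j k) in
def restrictMatching (f : α → α) (x : {x // x ≠ j ∧ x ≠ k}) : {x // x ≠ j ∧ x ≠ k} :=
  if h : f x ≠ j ∧ f x ≠ k then ⟨f x, h⟩ else x

theorem extendMatching_val (g : {x // x ≠ j ∧ x ≠ k} → {x // x ≠ j ∧ x ≠ k})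
    (x : {x // x ≠ j ∧ x ≠ k}) : extendMatching j k g x = g x := by
  simp [extendMatching, x.2.1, x.2.2]

theorem restrictMatching_extendMatching (g : {x // x ≠ j ∧ x ≠ k} → {x // x ≠ j ∧ x ≠ k}) :
    restrictMatching j k (extendMatching j k g) = g := by
  funext x
  simp [restrictMatching, extendMatching_val, (g x).2]

variable [Fintype α]

variable (α) in
def matchings : Finset (α → α) :=
  {f | ∀ i, f (f i) = i ∧ f i ≠ i}

theorem mem_matchings {f : α → α} : f ∈ matchings α ↔ ∀ i, f (f i) = i ∧ f i ≠ i := by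
  simp [matchings]

theorem card_matchings_congr {β : Type*} [DecidableEq β] [Fintype β] (e : α ≃ β) :
    #(matchings α) = #(matchings β) :=
  card_equiv (e.arrowCongr e) fun f => by
    simp only [mem_matchings, Equiv.arrowCongr_apply, Function.comp_apply, Equiv.symm_apply_apply,
      e.surjective.forall, Equiv.apply_eq_iff_eq, ne_eq]

def numMatchings (m : ℕ) : ℕ := #(matchings (Fin m))

theorem card_matchings : #(matchings α) = numMatchings (Fintype.card α) :=
  card_matchings_congr (Fintype.equivFin α)

theorem extendMatching_mem_matchings_iff (hjk : j ≠ k)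
    {g : {x // x ≠ j ∧ x ≠ k} → {x // x ≠ j ∧ x ≠ k}} :
    extendMatching j k g ∈ matchings α ↔ g ∈ matchings {x // x ≠ j ∧ x ≠ k} := by
  simp only [mem_matchings]
  constructor
  · intro h x
    have := h x
    rw [extendMatching_val, extendMatching_val] at this
    exact ⟨Subtype.ext this.1, fun h' => this.2 (congrArg Subtype.val h')⟩
  · intro h x
    by_cases hj : x = j
    · subst hj; simp [extendMatching, hjk.symm]
    by_cases hk : x = k
    · subst hk; simp [extendMatching, hjk.symm, hjk]
    have hx := extendMatching_val g ⟨x, hj, hk⟩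
    refine ⟨?_, ?_⟩
    · rw [hx, extendMatching_val, (h _).1]
    · rw [hx]; exact fun h' => (h _).2 (Subtype.ext h')

theorem extendMatching_restrictMatching {f : α → α} (hf : f ∈ matchings α) (hfj : f j = k) :
    extendMatching j k (restrictMatching j k f) = f := by
  rw [mem_matchings] at hf
  have hfk : f k = j := hfj ▸ (hf j).1
  funext x
  by_cases hj : x = j
  · simp [extendMatching, hj, hfj]
  by_cases hk : x = k
  · simp [extendMatching, hk, hfk]
  have hfx : f x ≠ j ∧ f x ≠ k := by
    refine ⟨fun h => hk ?_, fun h => hj ?_⟩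
    · rw [← (hf x).1, h, hfj]
    · rw [← (hf x).1, h, hfk]
  simp [extendMatching, restrictMatching, hj, hk, hfx]

theorem card_filter_matchings_apply_eq_and (hjk : j ≠ k) (p : (α → α) → Prop) [DecidablePred p] :
    #{f ∈ matchings α | f j = k ∧ p f} =
      #{g ∈ matchings {x // x ≠ j ∧ x ≠ k} | p (extendMatching j k g)} := by
  refine card_nbij' (restrictMatching j k) (extendMatching j k) ?_ ?_ ?_ ?_
  · intro f hf
    simp only [coe_filter, Set.mem_ofPred_eq] at hf ⊢
    rw [← extendMatching_mem_matchings_iff hjk, extendMatching_restrictMatching hf.1 hf.2.1]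
    exact ⟨hf.1, hf.2.2⟩
  · intro g hg
    simp only [coe_filter, Set.mem_ofPred_eq] at hg ⊢
    exact ⟨(extendMatching_mem_matchings_iff hjk).2 hg.1, by simp [extendMatching], hg.2⟩
  · intro f hf
    simp only [coe_filter, Set.mem_ofPred_eq] at hf
    exact extendMatching_restrictMatching hf.1 hf.2.1
  · intro g _
    exact restrictMatching_extendMatching g

theorem card_subtype_ne_and_ne (hjk : j ≠ k) :
    Fintype.card {x // x ≠ j ∧ x ≠ k} = Fintype.card α - 2 := by
  have h : ({x | x ≠ j ∧ x ≠ k} : Finset α) = (univ.erase j).erase k := by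
    ext x; simp [and_comm]
  rw [Fintype.card_subtype, h, card_erase_of_mem (by simp [hjk.symm]),
    card_erase_of_mem (mem_univ _), card_univ, Nat.sub_sub]

theorem card_filter_matchings_apply_eq (hjk : j ≠ k) :
    #{f ∈ matchings α | f j = k} = numMatchings (Fintype.card α - 2) := by
  have h := card_filter_matchings_apply_eq_and hjk (fun _ => True)
  simp only [and_true, filter_true] at h
  rw [h, card_matchings, card_subtype_ne_and_ne hjk]

theorem card_filter_matchings_apply_eq_and_apply_eq {j' k' : α} (hjk : j ≠ k)
    (hj' : j' ≠ j ∧ j' ≠ k) (hk' : k' ≠ j ∧ k' ≠ k) (hjk' : j' ≠ k') :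
    #{f ∈ matchings α | f j = k ∧ f j' = k'} = numMatchings (Fintype.card α - 4) := by
  rw [card_filter_matchings_apply_eq_and hjk]
  have hcongr : ∀ g : {x // x ≠ j ∧ x ≠ k} → {x // x ≠ j ∧ x ≠ k},
      extendMatching j k g j' = k' ↔ g ⟨j', hj'⟩ = ⟨k', hk'⟩ := fun g => by
    rw [extendMatching_val g ⟨j', hj'⟩, Subtype.ext_iff]
  rw [filter_congr fun g _ => hcongr g, card_filter_matchings_apply_eq (by simpa using hjk'),
    card_subtype_ne_and_ne hjk, Nat.sub_sub]

theorem numMatchings_add_two (m : ℕ) : numMatchings (m + 2) = (m + 1) * numMatchings m := by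
  have hmaps : Set.MapsTo (fun f : Fin (m + 2) → Fin (m + 2) => f 0) (matchings (Fin (m + 2)))
      (univ.erase (0 : Fin (m + 2))) :=
    fun f hf => by simpa using ((mem_matchings.1 hf) 0).2
  rw [numMatchings, card_eq_sum_card_fiberwise hmaps,
    sum_const_nat fun k hk => card_filter_matchings_apply_eq (mem_erase.1 hk).1.symm]
  simp [mul_comm]

theorem numMatchings_two_mul_pos (k : ℕ) : 0 < numMatchings (2 * k) := by
  induction k with
  | zero => decide
  | succ k ih => rw [Nat.mul_succ, numMatchings_add_two]; positivity

end Matchings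

section MaxRuns

variable {P : ℕ → Prop} {N a b a' b' v : ℕ}

def IsMaxRun (P : ℕ → Prop) (N a b : ℕ) : Prop :=
  1 ≤ a ∧ a ≤ b ∧ b ≤ N ∧ (∀ w, a ≤ w → w ≤ b → P w) ∧ (a = 1 ∨ ¬ P (a - 1)) ∧
    (b = N ∨ ¬ P (b + 1))

def IsRunEnd (P : ℕ → Prop) (N b : ℕ) : Prop :=
  P b ∧ (b = N ∨ ¬ P (b + 1))

open scoped Classical in
noncomputable def maxRuns (P : ℕ → Prop) (N : ℕ) : Finset (ℕ × ℕ) :=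
  {r ∈ Icc 1 N ×ˢ Icc 1 N | IsMaxRun P N r.1 r.2}

theorem mem_maxRuns {r : ℕ × ℕ} : r ∈ maxRuns P N ↔ IsMaxRun P N r.1 r.2 := by
  simp only [maxRuns, mem_filter, mem_product, mem_Icc, and_iff_right_iff_imp]
  rintro ⟨h1, h2, h3, -⟩
  omega

theorem IsMaxRun.eq_of_mem (h : IsMaxRun P N a b) (h' : IsMaxRun P N a' b')
    (hv : a ≤ v ∧ v ≤ b) (hv' : a' ≤ v ∧ v ≤ b') : a = a' ∧ b = b' := by
  obtain ⟨ha, -, hb, hP, hl, hr⟩ := h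
  obtain ⟨ha', -, hb', hP', hl', hr'⟩ := h'
  constructor
  · rcases lt_trichotomy a a' with hlt | heq | hlt
    · exact absurd (hP (a' - 1) (by omega) (by omega)) (hl'.resolve_left (by omega))
    · exact heq
    · exact absurd (hP' (a - 1) (by omega) (by omega)) (hl.resolve_left (by omega))
  · rcases lt_trichotomy b b' with hlt | heq | hlt
    · exact absurd (hP' (b + 1) (by omega) (by omega)) (hr.resolve_left (by omega))
    · exact heq
    · exact absurd (hP (b' + 1) (by omega) (by omega)) (hr'.resolve_left (by omega))

theorem exists_isMaxRun (hv : 1 ≤ v ∧ v ≤ N) (hPv : P v) :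
    ∃ a b, IsMaxRun P N a b ∧ a ≤ v ∧ v ≤ b := by
  classical
  have hleft : ∃ a, 1 ≤ a ∧ ∀ w, a ≤ w → w ≤ v → P w :=
    ⟨v, hv.1, fun w h1 h2 => le_antisymm h2 h1 ▸ hPv⟩
  set a := Nat.find hleft
  set R : ℕ → Prop := fun b => ∀ w, v ≤ w → w ≤ b → P w
  have hRv : R v := fun w h1 h2 => le_antisymm h2 h1 ▸ hPv
  set b := Nat.findGreatest R N
  have ha := Nat.find_spec hleft
  have hav : a ≤ v := Nat.find_min' hleft ⟨hv.1, hRv⟩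
  have hb : R b := Nat.findGreatest_spec hv.2 hRv
  have hvb : v ≤ b := Nat.le_findGreatest hv.2 hRv
  have hbN : b ≤ N := Nat.findGreatest_le N
  refine ⟨a, b, ⟨ha.1, hav.trans hvb, hbN, fun w h1 h2 => ?_, ?_, ?_⟩, hav, hvb⟩
  · rcases le_total w v with hw | hw
    exacts [ha.2 w h1 hw, hb w hw h2]
  · refine or_iff_not_imp_left.2 fun ha1 hPa => Nat.find_min hleft (m := a - 1) (by omega)
      ⟨by omega, fun w h1 h2 => ?_⟩
    rcases Nat.eq_or_lt_of_le h1 with rfl | hw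
    exacts [hPa, ha.2 w (by omega) h2]
  · refine or_iff_not_imp_left.2 fun hNb hPb => Nat.findGreatest_is_greatest (k := b + 1)
      (Nat.lt_succ_self b) (by omega) fun w h1 h2 => ?_
    rcases Nat.eq_or_lt_of_le h2 with rfl | hw
    exacts [hPb, hb w h1 (by omega)]

theorem sum_maxRuns_length [DecidablePred P] :
    ∑ r ∈ maxRuns P N, (r.2 - r.1 + 1) = #{v ∈ Icc 1 N | P v} := by
  have hdisj : (maxRuns P N : Set (ℕ × ℕ)).PairwiseDisjoint fun r => Icc r.1 r.2 := by
    intro r hr r' hr' hne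
    refine disjoint_left.2 fun v hv hv' => hne ?_
    rw [mem_Icc] at hv hv'
    obtain ⟨h1, h2⟩ := (mem_maxRuns.1 hr).eq_of_mem (mem_maxRuns.1 hr') hv hv'
    exact Prod.ext h1 h2
  have hunion : (maxRuns P N).biUnion (fun r => Icc r.1 r.2) = {v ∈ Icc 1 N | P v} := by
    ext v
    simp only [mem_biUnion, mem_Icc, mem_filter, mem_maxRuns]
    constructor
    · rintro ⟨r, ⟨h1, -, h3, hP, -⟩, hv⟩
      exact ⟨⟨by omega, by omega⟩, hP v hv.1 hv.2⟩
    · rintro ⟨hv, hPv⟩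
      obtain ⟨a, b, hab, hav, hvb⟩ := exists_isMaxRun hv hPv
      exact ⟨(a, b), hab, hav, hvb⟩
  rw [← hunion, card_biUnion hdisj]
  refine sum_congr rfl fun r hr => ?_
  have := (mem_maxRuns.1 hr).2.1
  rw [Nat.card_Icc]
  omega

open scoped Classical in
theorem card_maxRuns :
    #(maxRuns P N) = #{b ∈ Icc 1 N | IsRunEnd P N b} := by
  refine card_nbij Prod.snd (fun r hr => ?_) (fun r hr r' hr' h => ?_) (fun b hb => ?_)
  · obtain ⟨h1, h2, h3, hP, -, hr⟩ := mem_maxRuns.1 hr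
    rw [mem_coe, mem_filter, mem_Icc]
    exact ⟨⟨by omega, h3⟩, hP _ h2 le_rfl, hr⟩
  · have hr := mem_maxRuns.1 hr
    have hr' := mem_maxRuns.1 hr'
    obtain ⟨h1, h2⟩ := hr.eq_of_mem hr' ⟨hr.2.1, le_rfl⟩ ⟨h ▸ hr'.2.1, h.le⟩
    exact Prod.ext h1 h2
  · rw [mem_coe, mem_filter, mem_Icc] at hb
    obtain ⟨hb, hPb, hend⟩ := hb
    obtain ⟨a', b', hrun, ha', hb'⟩ := exists_isMaxRun hb hPb
    refine ⟨(a', b'), mem_maxRuns.2 hrun, le_antisymm (by_contra fun hlt => ?_) hb'⟩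
    obtain ⟨-, -, hbN, hP, -⟩ := hrun
    exact hend.elim (by omega) fun h => h (hP _ (by omega) (by omega))

end MaxRuns

section Diagram

variable {n : ℕ} {f : Fin (2 * n) → Fin (2 * n)} {i a b : ℕ}

theorem isLCD_iff_mem_matchings : IsLCD n f ↔ f ∈ matchings (Fin (2 * n)) :=
  mem_matchings.symm

theorem IsShort.one_le (h : IsShort n f i) : 1 ≤ i := by
  obtain ⟨h1, -, -⟩ := h; exact h1

theorem IsShort.lt (h : IsShort n f i) : i < 2 * n := by
  obtain ⟨-, h2, -⟩ := h; exact h2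

theorem not_isShort_zero : ¬ IsShort n f 0 := fun h => by have := h.one_le; omega

theorem IsShort.not_isShort_add_one (hf : IsLCD n f) (h : IsShort n f i) :
    ¬ IsShort n f (i + 1) := fun ⟨_, hi2, hsucc⟩ => by
  obtain ⟨hi1, hi, he⟩ := h
  have hff := (hf ⟨i - 1, by omega⟩).1
  rw [he, show f ⟨i, hi⟩ = ⟨i + 1, hi2⟩ from hsucc, Fin.mk.injEq] at hff
  omega

theorem IsShort.not_isShort_sub_one (hf : IsLCD n f) (h : IsShort n f (i - 1)) :
    ¬ IsShort n f i := by
  have := h.one_le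
  simpa [show i - 1 + 1 = i by omega] using h.not_isShort_add_one hf

/-- `v` lies on no short chord (`IsShort n f i` is the chord `{i, i + 1}`). -/
def IsFree (n : ℕ) (f : Fin (2 * n) → Fin (2 * n)) (v : ℕ) : Prop :=
  ¬ IsShort n f v ∧ ¬ IsShort n f (v - 1)

theorem isBubble_iff_isMaxRun (hf : IsLCD n f) :
    IsBubble n f a b ↔ IsMaxRun (IsFree n f) (2 * n) a b := by
  unfold IsBubble IsMaxRun IsFree
  refine and_congr_right fun ha => and_congr_right fun hab => and_congr_right fun hb => ?_
  constructor
  · rintro ⟨hin, hl, hr⟩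
    refine ⟨fun w haw hwb => ⟨fun hw => ?_, fun hw => ?_⟩, ?_, ?_⟩
    · rcases Nat.lt_or_ge w b with hwb' | hwb'
      · exact hin w haw hwb' hw
      · obtain rfl | hr := hr
        · exact absurd hw.lt (by omega)
        · exact hw.not_isShort_add_one hf (by rwa [show w = b by omega])
    · rcases Nat.lt_or_ge (w - 1) a with hwa | hwa
      · obtain rfl | hl := hl
        · exact not_isShort_zero (by rwa [show w - 1 = 0 by omega] at hw)
        · have := hl.one_le
          exact hl.not_isShort_add_one hf (by rwa [show a - 2 + 1 = w - 1 by omega])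
      · have := hw.one_le
        exact hin (w - 1) hwa (by omega) hw
    · exact hl.imp_right fun h hfree => hfree.2 (by rwa [show a - 1 - 1 = a - 2 by omega])
    · exact hr.imp_right fun h hfree => hfree.1 h
  · rintro ⟨hin, hl, hr⟩
    refine ⟨fun j haj hjb hj => (hin j haj (by omega)).1 hj, ?_, ?_⟩
    · refine hl.imp_right fun h => ?_
      rw [not_and_or, not_not, not_not] at h
      rcases h with h | h
      · exact absurd h (hin a le_rfl hab).2
      · rwa [show a - 1 - 1 = a - 2 by omega] at h
    · refine hr.imp_right fun h => ?_
      rw [not_and_or, not_not, not_not] at h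
      rcases h with h | h
      · exact h
      · exact absurd (by simpa using h) (hin b hab le_rfl).1

end Diagram

section Counting

open scoped Classical

variable {n : ℕ}

theorem card_filter_isShort (i : ℕ) :
    #{f ∈ matchings (Fin (2 * n)) | IsShort n f i} =
      if 1 ≤ i ∧ i < 2 * n then numMatchings (2 * n - 2) else 0 := by
  split_ifs with h
  · have hne : (⟨i - 1, by omega⟩ : Fin (2 * n)) ≠ ⟨i, h.2⟩ := by simp [Fin.ext_iff]; omega
    have hiff : ∀ f : Fin (2 * n) → Fin (2 * n),
        IsShort n f i ↔ f ⟨i - 1, by omega⟩ = ⟨i, h.2⟩ :=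
      fun f => ⟨fun ⟨_, _, he⟩ => he, fun he => ⟨h.1, h.2, he⟩⟩
    rw [filter_congr fun f _ => hiff f, card_filter_matchings_apply_eq hne, Fintype.card_fin]
  · exact card_eq_zero.2 (filter_eq_empty_iff.2 fun f _ hs => h ⟨hs.one_le, hs.lt⟩)

theorem card_filter_isShort_sub_one_and_isShort_add_one (b : ℕ) :
    #{f ∈ matchings (Fin (2 * n)) | IsShort n f (b - 1) ∧ IsShort n f (b + 1)} =
      if 2 ≤ b ∧ b + 1 < 2 * n then numMatchings (2 * n - 4) else 0 := by
  split_ifs with h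
  · have hiff : ∀ f : Fin (2 * n) → Fin (2 * n),
        IsShort n f (b - 1) ∧ IsShort n f (b + 1) ↔
          f ⟨b - 1 - 1, by omega⟩ = ⟨b - 1, by omega⟩ ∧ f ⟨b + 1 - 1, by omega⟩ = ⟨b + 1, h.2⟩ :=
      fun f => ⟨fun ⟨⟨_, _, he⟩, ⟨_, _, he'⟩⟩ => ⟨he, he'⟩,
        fun ⟨he, he'⟩ => ⟨⟨by omega, by omega, he⟩, ⟨by omega, h.2, he'⟩⟩⟩
    rw [filter_congr fun f _ => hiff f, card_filter_matchings_apply_eq_and_apply_eq,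
      Fintype.card_fin]
    all_goals simp only [ne_eq, Fin.ext_iff]; omega
  · refine card_eq_zero.2 (filter_eq_empty_iff.2 fun f _ hs => h ⟨?_, hs.2.lt⟩)
    have := hs.1.one_le
    omega

theorem card_filter_isFree_add (v : ℕ) :
    #{f ∈ matchings (Fin (2 * n)) | IsFree n f v} +
      #{f ∈ matchings (Fin (2 * n)) | IsShort n f v} +
      #{f ∈ matchings (Fin (2 * n)) | IsShort n f (v - 1)} = numMatchings (2 * n) := by
  rw [card_filter, card_filter, card_filter, ← sum_add_distrib, ← sum_add_distrib, numMatchings,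
    card_eq_sum_ones]
  refine sum_congr rfl fun f hf => ?_
  have hexcl := fun h => IsShort.not_isShort_sub_one (isLCD_iff_mem_matchings.2 hf) (i := v) h
  by_cases h1 : IsShort n f v <;> by_cases h2 : IsShort n f (v - 1) <;> simp_all [IsFree]

/-- For `b < 2n`, `b` ends a run of free vertices iff `{b + 1, b + 2}` is a short chord and
`{b - 1, b}` is not. -/
theorem card_filter_isRunEnd_add {b : ℕ} (hb : b < 2 * n) :
    #{f ∈ matchings (Fin (2 * n)) | IsRunEnd (IsFree n f) (2 * n) b} +
      #{f ∈ matchings (Fin (2 * n)) | IsShort n f (b - 1) ∧ IsShort n f (b + 1)} =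
      #{f ∈ matchings (Fin (2 * n)) | IsShort n f (b + 1)} := by
  rw [card_filter, card_filter, card_filter, ← sum_add_distrib]
  refine sum_congr rfl fun f hf => ?_
  have hexcl := fun h => IsShort.not_isShort_add_one (isLCD_iff_mem_matchings.2 hf) (i := b) h
  by_cases h1 : IsShort n f (b - 1) <;> by_cases h2 : IsShort n f b <;>
    by_cases h3 : IsShort n f (b + 1) <;> simp_all [IsRunEnd, IsFree, hb.ne]

theorem sum_mul_B (n : ℕ) (h : ℕ → ℕ) :
    ∑ p ∈ Icc 1 (2 * n), h p * B n p =
      ∑ f ∈ matchings (Fin (2 * n)), ∑ r ∈ maxRuns (IsFree n f) (2 * n), h (r.2 - r.1 + 1) := by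
  set S := {x ∈ (univ : Finset (Fin (2 * n) → Fin (2 * n))) ×ˢ (Icc 1 (2 * n) ×ˢ Icc 1 (2 * n)) |
    IsLCD n x.1 ∧ IsBubble n x.1 x.2.1 x.2.2}
  have hB : ∀ p, B n p = #{x ∈ S | x.2.2 - x.2.1 + 1 = p} := fun p => by
    rw [B, filter_filter]
    simp only [and_assoc]
  have hmaps : ∀ x ∈ S, x.2.2 - x.2.1 + 1 ∈ Icc 1 (2 * n) := fun x hx => by
    simp only [S, mem_filter, mem_product, mem_Icc] at hx ⊢
    omega
  have hS : ∀ x, x ∈ S ↔ x.1 ∈ matchings (Fin (2 * n)) ∧ x.2 ∈ maxRuns (IsFree n x.1) (2 * n) :=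
    fun x => by
      simp only [S, mem_filter, mem_product, mem_univ, true_and, mem_maxRuns,
        ← isLCD_iff_mem_matchings]
      constructor
      · rintro ⟨-, hf, hb⟩
        exact ⟨hf, (isBubble_iff_isMaxRun hf).1 hb⟩
      · rintro ⟨hf, hr⟩
        exact ⟨mem_product.1 (mem_filter.1 (mem_maxRuns.2 hr)).1, hf,
          (isBubble_iff_isMaxRun hf).2 hr⟩
  calc ∑ p ∈ Icc 1 (2 * n), h p * B n p
      = ∑ p ∈ Icc 1 (2 * n), ∑ x ∈ S with x.2.2 - x.2.1 + 1 = p, h (x.2.2 - x.2.1 + 1) :=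
        sum_congr rfl fun p _ => by
          rw [hB, sum_const_nat fun x hx => by rw [(mem_filter.1 hx).2], mul_comm]
    _ = ∑ x ∈ S, h (x.2.2 - x.2.1 + 1) := sum_fiberwise_of_maps_to hmaps _
    _ = _ := sum_finset_product S _ _ hS

theorem sum_card_filter_comm {α β : Type*} (s : Finset α) (t : Finset β) (r : α → β → Prop)
    [∀ a b, Decidable (r a b)] :
    ∑ a ∈ s, #{b ∈ t | r a b} = ∑ b ∈ t, #{a ∈ s | r a b} := by
  simp only [card_filter]
  exact sum_comm

theorem sum_card_filter_isFree (m : ℕ) :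
    ∑ v ∈ Icc 1 (2 * (m + 2)), #{f ∈ matchings (Fin (2 * (m + 2))) | IsFree (m + 2) f v} =
      (2 * m + 2) * (2 * m + 3) * numMatchings (2 * m + 2) := by
  have hsum := sum_congr rfl fun v (_ : v ∈ Icc 1 (2 * (m + 2))) =>
    card_filter_isFree_add (n := m + 2) v
  rw [sum_add_distrib, sum_add_distrib, sum_const, Nat.card_Icc, smul_eq_mul] at hsum
  simp only [card_filter_isShort, ← sum_filter, sum_const, smul_eq_mul] at hsum
  have h1 : {v ∈ Icc 1 (2 * (m + 2)) | 1 ≤ v ∧ v < 2 * (m + 2)} = Icc 1 (2 * m + 3) := by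
    ext; simp; omega
  have h2 : {v ∈ Icc 1 (2 * (m + 2)) | 1 ≤ v - 1 ∧ v - 1 < 2 * (m + 2)} = Icc 2 (2 * m + 4) := by
    ext; simp; omega
  have hT : numMatchings (2 * (m + 2)) = (2 * m + 3) * numMatchings (2 * m + 2) :=
    numMatchings_add_two (2 * m + 2)
  rw [h1, h2, Nat.card_Icc, Nat.card_Icc, hT, show 2 * (m + 2) - 2 = 2 * m + 2 by omega,
    show 2 * m + 4 + 1 - 2 = 2 * m + 3 by omega, Nat.add_sub_cancel, Nat.add_sub_cancel] at hsum
  linarith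

theorem sum_card_filter_isRunEnd (m : ℕ) :
    ∑ b ∈ Icc 1 (2 * (m + 2)),
      #{f ∈ matchings (Fin (2 * (m + 2))) | IsRunEnd (IsFree (m + 2) f) (2 * (m + 2)) b} =
      (4 * m + 3) * numMatchings (2 * m + 2) := by
  have hI : Icc 1 (2 * (m + 2)) = insert (2 * (m + 2)) (Icc 1 (2 * m + 3)) := by
    ext; simp; omega
  have hlast := card_filter_isFree_add (n := m + 2) (2 * (m + 2))
  have hsum := sum_congr rfl fun b (hb : b ∈ Icc 1 (2 * m + 3)) =>
    card_filter_isRunEnd_add (n := m + 2) (b := b) (by simp at hb; omega)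
  rw [sum_add_distrib] at hsum
  simp only [card_filter_isShort, card_filter_isShort_sub_one_and_isShort_add_one, ← sum_filter,
    sum_const, smul_eq_mul] at hsum hlast
  have h1 : {b ∈ Icc 1 (2 * m + 3) | 1 ≤ b + 1 ∧ b + 1 < 2 * (m + 2)} = Icc 1 (2 * m + 2) := by
    ext; simp; omega
  have h2 : {b ∈ Icc 1 (2 * m + 3) | 2 ≤ b ∧ b + 1 < 2 * (m + 2)} = Icc 2 (2 * m + 2) := by
    ext; simp; omega
  have hT : numMatchings (2 * (m + 2)) = (2 * m + 3) * numMatchings (2 * m + 2) :=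
    numMatchings_add_two (2 * m + 2)
  have hT' : numMatchings (2 * m + 2) = (2 * m + 1) * numMatchings (2 * m) :=
    numMatchings_add_two (2 * m)
  rw [h1, h2, Nat.card_Icc, Nat.card_Icc, show 2 * (m + 2) - 2 = 2 * m + 2 by omega,
    show 2 * (m + 2) - 4 = 2 * m by omega] at hsum
  rw [if_neg (by omega), if_pos (by omega), hT, show 2 * (m + 2) - 2 = 2 * m + 2 by omega] at hlast
  rw [hI, sum_insert (by rw [mem_Icc]; omega)]
  have hend : ∀ f, IsRunEnd (IsFree (m + 2) f) (2 * (m + 2)) (2 * (m + 2)) ↔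
      IsFree (m + 2) f (2 * (m + 2)) := fun f => by simp [IsRunEnd]
  rw [filter_congr fun f _ => hend f]
  rw [show 2 * m + 2 + 1 - 2 = 2 * m + 1 by omega, Nat.add_sub_cancel, ← hT'] at hsum
  linarith

theorem sum_mul_B_add_two (m : ℕ) :
    ∑ p ∈ Icc 1 (2 * (m + 2)), p * B (m + 2) p =
      (2 * m + 2) * (2 * m + 3) * numMatchings (2 * m + 2) := by
  refine (sum_mul_B (m + 2) fun p => p).trans ?_
  simp only [sum_maxRuns_length]
  rw [sum_card_filter_comm, sum_card_filter_isFree]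

theorem sum_B_add_two (m : ℕ) :
    ∑ p ∈ Icc 1 (2 * (m + 2)), B (m + 2) p = (4 * m + 3) * numMatchings (2 * m + 2) := by
  have h := sum_mul_B (m + 2) fun _ => 1
  simp only [one_mul, sum_const, smul_eq_mul, mul_one, card_maxRuns] at h
  rw [h, sum_card_filter_comm, sum_card_filter_isRunEnd]

end Counting

/-- The mean bubble size over all linear chord diagrams on `2n` vertices is
asymptotic to `n`. -/
theorem mean_bubble_size_asymptotic :
    Filter.Tendsto (fun n : ℕ =>
      ((∑ p ∈ Finset.Icc 1 (2*n), p * B n p : ℕ) : ℝ) /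
        ((n : ℝ) * ((∑ p ∈ Finset.Icc 1 (2*n), B n p : ℕ) : ℝ)))
      Filter.atTop (nhds 1) := by
  rw [← Filter.tendsto_add_atTop_iff_nat 2]
  have h : ∀ a b : ℝ, Filter.Tendsto (fun m : ℕ => a + b / m) Filter.atTop (nhds a) := fun a b => by
    simpa using tendsto_const_nhds.add (tendsto_const_div_atTop_nhds_zero_nat b)
  have hlim := ((h 2 2).mul (h 2 3)).div ((h 1 2).mul (h 4 3)) (by norm_num)
  rw [show (2 : ℝ) * 2 / (1 * 4) = 1 by norm_num] at hlim
  refine hlim.congr' (Filter.eventually_atTop.2 ⟨1, fun m hm => ?_⟩)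
  have hT : (0 : ℝ) < numMatchings (2 * m + 2) := by
    exact_mod_cast numMatchings_two_mul_pos (m + 1)
  have hm : (0 : ℝ) < m := by exact_mod_cast hm
  simp only [Pi.div_apply, sum_mul_B_add_two, sum_B_add_two]
  push_cast
  field_simp
end
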